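/- arXiv:2303.02746 — 2 statements merged into one kernel-verified Lean document; each statement's English description precedes it below -/
import Mathlib

section
/- Suppose each objective f_i (i = 1, …, T) is M_f-relatively Lipschitz continuous and μ-relatively strongly convex w.r.t. h with μ > 0, and the constraint g is M_g-relatively Lipschitz continuous and μ-relatively strongly convex w.r.t. h; set M = max(M_f, M_g). If the switching mirror-descent algorithm with step sizes η_t = 1/(μ·t) and threshold ε > 0 performs exactly T productive steps and T_J non-productive steps, then Σ_{i=1}^T f_i(x_{t_i}) − Σ_{i=1}^T f_i(x*) ≤ (M²/μ)·(1 + ln(T + T_J)) − ε·T_J. -/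
open scoped RealInnerProductSpace
open Finset

/-- The Bregman divergence `V(y,x) = h(y) − h(x) − ⟨∇h(x), y − x⟩`. -/
noncomputable def breg {E : Type*} [NormedAddCommGroup E] [InnerProductSpace ℝ E]
    [CompleteSpace E] (h : E → ℝ) (y x : E) : ℝ :=
  h y - h x - ⟪gradient h x, y - x⟫

/-- `f` is `M`-relatively Lipschitz continuous w.r.t. the prox-function `h` on `Q`. -/
noncomputable def RelLipschitz {E : Type*} [NormedAddCommGroup E] [InnerProductSpace ℝ E]
    [CompleteSpace E] (h : E → ℝ) (Q : Set E) (M : ℝ) (f : E → ℝ) : Prop :=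
  ∀ x ∈ Q, ∀ y ∈ Q, 0 ≤ ⟪gradient f x, y - x⟫ + M * Real.sqrt (2 * breg h y x)

/-- `f` is `μ`-relatively strongly convex w.r.t. the prox-function `h` on `Q`. -/
noncomputable def RelStrongConvex {E : Type*} [NormedAddCommGroup E] [InnerProductSpace ℝ E]
    [CompleteSpace E] (h : E → ℝ) (Q : Set E) (μ : ℝ) (f : E → ℝ) : Prop :=
  ∀ x ∈ Q, ∀ y ∈ Q, f y + ⟪gradient f y, x - y⟫ + μ * breg h x y ≤ f x

/-- One mirror-descent step from `x` with step size `η` in the direction `v`: there is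
`y` with `∇h(y) = ∇h(x) − η·v`, and the next iterate `x'` is the Bregman projection of
`y` onto `Q`. -/
noncomputable def MDStepV {E : Type*} [NormedAddCommGroup E] [InnerProductSpace ℝ E]
    [CompleteSpace E] (h : E → ℝ) (Q : Set E) (η : ℝ) (v : E) (x x' : E) : Prop :=
  ∃ y : E, gradient h y = gradient h x - η • v ∧ x' ∈ Q ∧
    IsMinOn (fun z => breg h z y) Q x'

/-!
Each mirror-descent step with step size `1/(μ t)` on a `μ`-relatively strongly convex,
`M`-relatively Lipschitz objective `φ_t` satisfies, for every comparator `u ∈ Q`,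
`φ_t(x_t) − φ_t(u) ≤ M²/(2μt) + μ(t−1)·V(u,x_t) − μt·V(u,x_{t+1})`: the optimality
condition of the Bregman projection and the three-point identity give the divergence terms,
and Young's inequality absorbs the movement term. Summing over all `T + T_J` steps, the
divergence terms telescope, so the total regret is at most `(M²/2μ)·H_{T+T_J}`. Taking
`u = x*`, every non-productive step contributes `g(x_t) − g(x*) > ε`.
-/

open Function

section Bregman

variable {E : Type*} [NormedAddCommGroup E] [InnerProductSpace ℝ E] [CompleteSpace E]

theorem ConvexOn.add_inner_gradient_le {φ : E → ℝ} (hd : Differentiable ℝ φ)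
    (hc : ConvexOn ℝ Set.univ φ) (x y : E) : φ x + ⟪gradient φ x, y - x⟫ ≤ φ y := by
  set ψ : ℝ → ℝ := fun t => φ (x + t • (y - x)) with hψ
  have hder : HasDerivAt ψ ⟪gradient φ x, y - x⟫ 0 := by
    have hline : HasDerivAt (fun s : ℝ => x + s • (y - x)) (y - x) 0 := by
      simpa using ((hasDerivAt_id (0 : ℝ)).smul_const (y - x)).const_add x
    have := (hd x).hasGradientAt.hasFDerivAt.comp_hasDerivAt_of_eq (0 : ℝ) hline (by simp)
    simp only [InnerProductSpace.toDual_apply_apply] at this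
    exact this
  have hψconv : ConvexOn ℝ Set.univ ψ := by
    have : ψ = φ ∘ AffineMap.lineMap x y := by
      funext t
      simp only [hψ, Function.comp_apply, AffineMap.lineMap_apply_module]
      congr 1
      module
    simpa [this] using hc.comp_affineMap (AffineMap.lineMap x y)
  have := hψconv.le_slope_of_hasDerivAt (Set.mem_univ 0) (Set.mem_univ 1) zero_lt_one hder
  simp only [hψ, slope_def_field, zero_smul, add_zero, one_smul, add_sub_cancel, sub_zero,
    div_one] at this
  linarith

variable {h : E → ℝ} {Q : Set E}

theorem breg_nonneg (hd : Differentiable ℝ h) (hc : ConvexOn ℝ Set.univ h) (y x : E) :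
    0 ≤ breg h y x := by
  have := hc.add_inner_gradient_le hd x y
  simp only [breg]
  linarith

theorem RelLipschitz.mono {M M' : ℝ} {φ : E → ℝ} (hφ : RelLipschitz h Q M φ) (hM : M ≤ M') :
    RelLipschitz h Q M' φ := fun x hx y hy =>
  (hφ x hx y hy).trans (by gcongr)

theorem inner_gradient_sub_nonneg_of_isMinOn_breg (hQ : Convex ℝ Q) (hd : Differentiable ℝ h)
    {y x' u : E} (hx' : x' ∈ Q) (hmin : IsMinOn (fun z => breg h z y) Q x') (hu : u ∈ Q) :
    0 ≤ ⟪gradient h x' - gradient h y, u - x'⟫ := by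
  have hD : HasFDerivAt (fun z => breg h z y)
      (InnerProductSpace.toDual ℝ E (gradient h x') - innerSL ℝ (gradient h y)) x' := by
    have hlin : HasFDerivAt (fun z : E => ⟪gradient h y, z - y⟫) (innerSL ℝ (gradient h y)) x' :=
      (((innerSL ℝ (gradient h y)).hasFDerivAt).sub_const ⟪gradient h y, y⟫).congr_of_eventuallyEq
        (Filter.Eventually.of_forall fun z => by simp [inner_sub_right])
    exact (((hd x').hasGradientAt.hasFDerivAt).sub_const (h y)).sub hlin
  have htang : u - x' ∈ posTangentConeAt Q x' :=
    sub_mem_posTangentConeAt_of_segment_subset (hQ.segment_subset hx' hu)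
  simpa [inner_sub_left] using
    hmin.localize.hasFDerivWithinAt_nonneg hD.hasFDerivWithinAt htang

variable {η : ℝ} {v x x' u : E}

theorem MDStepV.smul_inner_sub_le (hQ : Convex ℝ Q) (hd : Differentiable ℝ h)
    (hstep : MDStepV h Q η v x x') (hu : u ∈ Q) :
    η * ⟪v, x' - u⟫ ≤ breg h u x - breg h u x' - breg h x' x := by
  obtain ⟨y, hy, hx', hmin⟩ := hstep
  have hvi := inner_gradient_sub_nonneg_of_isMinOn_breg hQ hd hx' hmin hu
  rw [hy] at hvi
  simp only [breg, inner_sub_left, inner_sub_right, inner_smul_left, RCLike.conj_to_real]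
    at hvi ⊢
  linarith

theorem MDStepV.smul_inner_gradient_sub_le (hQ : Convex ℝ Q) (hd : Differentiable ℝ h)
    (hc : ConvexOn ℝ Set.univ h) {φ : E → ℝ} {M : ℝ} (hLip : RelLipschitz h Q M φ)
    (hη : 0 ≤ η) (hx : x ∈ Q) (hstep : MDStepV h Q η (gradient φ x) x x') (hu : u ∈ Q) :
    η * ⟪gradient φ x, x - u⟫ ≤ η ^ 2 * M ^ 2 / 2 + breg h u x - breg h u x' := by
  have hproj := hstep.smul_inner_sub_le hQ hd hu
  obtain ⟨-, -, hx', -⟩ := hstep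
  have hW := breg_nonneg hd hc x' x
  have hsqrt := Real.sq_sqrt (by linarith : 0 ≤ 2 * breg h x' x)
  have hyoung : η * (M * √(2 * breg h x' x)) ≤ η ^ 2 * M ^ 2 / 2 + breg h x' x := by
    nlinarith [sq_nonneg (η * M - √(2 * breg h x' x))]
  have hsplit : ⟪gradient φ x, x - u⟫ = ⟪gradient φ x, x' - u⟫ - ⟪gradient φ x, x' - x⟫ := by
    rw [← inner_sub_right, sub_sub_sub_cancel_left]
  rw [hsplit]
  linarith [mul_le_mul_of_nonneg_left (hLip x hx x' hx') hη]

theorem MDStepV.sub_le_of_relStrongConvex (hQ : Convex ℝ Q) (hd : Differentiable ℝ h)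
    (hc : ConvexOn ℝ Set.univ h) {φ : E → ℝ} {M μ t : ℝ} (hμ : 0 < μ) (ht : 0 < t)
    (hLip : RelLipschitz h Q M φ) (hSC : RelStrongConvex h Q μ φ) (hx : x ∈ Q)
    (hstep : MDStepV h Q (1 / (μ * t)) (gradient φ x) x x') (hu : u ∈ Q) :
    φ x - φ u ≤ M ^ 2 / (2 * μ * t) + μ * (t - 1) * breg h u x - μ * t * breg h u x' := by
  have hμt : 0 < μ * t := mul_pos hμ ht
  have key := hstep.smul_inner_gradient_sub_le hQ hd hc hLip (by positivity) hx hu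
  have key' : ⟪gradient φ x, x - u⟫ ≤
      M ^ 2 / (2 * μ * t) + μ * t * breg h u x - μ * t * breg h u x' := by
    have := mul_le_mul_of_nonneg_left key hμt.le
    field_simp at this ⊢
    exact this
  have hsc := hSC u hu x hx
  rw [← neg_sub x u, inner_neg_right] at hsc
  linarith

end Bregman

theorem mirrorDescent_regret_le {E : Type*} [NormedAddCommGroup E] [InnerProductSpace ℝ E]
    [CompleteSpace E] {h : E → ℝ} {Q : Set E} (hQ : Convex ℝ Q) (hd : Differentiable ℝ h)
    (hc : ConvexOn ℝ Set.univ h) {φ : ℕ → E → ℝ} {M μ : ℝ} (hμ : 0 < μ) {N : ℕ}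
    (hLip : ∀ t ∈ Icc 1 N, RelLipschitz h Q M (φ t))
    (hSC : ∀ t ∈ Icc 1 N, RelStrongConvex h Q μ (φ t)) {x : ℕ → E} (hx1 : x 1 ∈ Q)
    (hstep : ∀ t ∈ Icc 1 N, MDStepV h Q (1 / (μ * t)) (gradient (φ t) (x t)) (x t) (x (t + 1)))
    {u : E} (hu : u ∈ Q) :
    ∑ t ∈ Icc 1 N, (φ t (x t) - φ t u) ≤ M ^ 2 / (2 * μ) * harmonic N := by
  have key : ∀ n ≤ N, x (n + 1) ∈ Q ∧ ∑ t ∈ Icc 1 n, (φ t (x t) - φ t u) +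
      μ * n * breg h u (x (n + 1)) ≤ M ^ 2 / (2 * μ) * harmonic n := by
    intro n hn
    induction n with
    | zero => simpa using hx1
    | succ n ih =>
      obtain ⟨hxn, hsum⟩ := ih (by omega)
      have ht : n + 1 ∈ Icc 1 N := mem_Icc.2 ⟨by omega, hn⟩
      have hone := (hstep _ ht).sub_le_of_relStrongConvex hQ hd hc hμ (by positivity)
        (hLip _ ht) (hSC _ ht) hxn hu
      obtain ⟨-, -, hxn', -⟩ := hstep _ ht
      refine ⟨hxn', ?_⟩
      have hrate : M ^ 2 / (2 * μ * (n + 1)) = M ^ 2 / (2 * μ) * (n + 1 : ℝ)⁻¹ := by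
        field_simp
      rw [sum_Icc_succ_top (by omega), harmonic_succ]
      push_cast at hone ⊢
      linarith
  have hlast := mul_nonneg (mul_nonneg hμ.le (Nat.cast_nonneg N)) (breg_nonneg hd hc u (x (N + 1)))
  linarith [(key N le_rfl).2]

theorem sum_comp_add_mul_card_le_sum {ι κ : Type*} [Fintype κ] [DecidableEq ι] {s : Finset ι}
    {σ : κ → ι} (hσ : Injective σ) (hs : ∀ i, σ i ∈ s) {A : ι → ℝ} {ε : ℝ}
    (hA : ∀ t ∈ s, (¬∃ i, σ i = t) → ε ≤ A t) :
    ∑ i, A (σ i) + ε * (#s - Fintype.card κ) ≤ ∑ t ∈ s, A t := by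
  have himg : univ.image σ ⊆ s := by
    intro t ht
    obtain ⟨i, -, rfl⟩ := mem_image.1 ht
    exact hs i
  have hcard : (#(s \ univ.image σ) : ℝ) = #s - Fintype.card κ := by
    rw [card_sdiff_of_subset himg, Nat.cast_sub (card_le_card himg),
      card_image_of_injective _ hσ, card_univ]
  have hrest := card_nsmul_le_sum (s \ univ.image σ) A ε fun t ht => by
    obtain ⟨hts, htσ⟩ := mem_sdiff.1 ht
    exact hA t hts fun ⟨i, hi⟩ => htσ (mem_image.2 ⟨i, mem_univ i, hi⟩)
  rw [nsmul_eq_mul, hcard] at hrest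
  rw [← sum_sdiff himg, sum_image hσ.injOn]
  linarith

theorem switching_mirror_descent_key_inequality_general
    {E : Type*} [NormedAddCommGroup E] [InnerProductSpace ℝ E] [FiniteDimensional ℝ E]
    (Q : Set E) (hQconv : Convex ℝ Q)
    (h : E → ℝ) (hdiff : Differentiable ℝ h) (hconv : ConvexOn ℝ Set.univ h)
    (T TJ : ℕ)
    (f : Fin T → E → ℝ) (g : E → ℝ)
    (Mf Mg μ : ℝ) (hμ : 0 < μ)
    (hfLip : ∀ i, RelLipschitz h Q Mf (f i)) (hgLip : RelLipschitz h Q Mg g)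
    (hfSC : ∀ i, RelStrongConvex h Q μ (f i)) (hgSC : RelStrongConvex h Q μ g)
    (M ε : ℝ) (hM : M = max Mf Mg)
    -- the iterates and the run of the switching algorithm:
    (x : ℕ → E) (hx1 : x 1 ∈ Q)
    (σ : Fin T → ℕ) (hσmono : StrictMono σ)
    (hσrange : ∀ i, σ i ∈ Finset.Icc 1 (T + TJ))
    (hproductive : ∀ t ∈ Finset.Icc 1 (T + TJ), (g (x t) ≤ ε ↔ ∃ i, σ i = t))
    (hstepP : ∀ i : Fin T,
      MDStepV h Q (1 / (μ * σ i)) (gradient (f i) (x (σ i))) (x (σ i)) (x (σ i + 1)))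
    (hstepN : ∀ t ∈ Finset.Icc 1 (T + TJ), (¬ ∃ i, σ i = t) →
      MDStepV h Q (1 / (μ * t)) (gradient g (x t)) (x t) (x (t + 1)))
    -- the constrained minimizer x*:
    (xs : E) (hxsQ : xs ∈ Q) (hxsg : g xs ≤ 0) :
    ∑ i, f i (x (σ i)) - ∑ i, f i xs ≤
      M ^ 2 / μ * (1 + Real.log (T + TJ)) - ε * TJ := by
  have hσinj := hσmono.injective
  set φ : ℕ → E → ℝ := extend σ f fun _ => g
  have hobj : ∀ t ∈ Icc 1 (T + TJ), RelLipschitz h Q M (φ t) ∧ RelStrongConvex h Q μ (φ t) ∧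
      MDStepV h Q (1 / (μ * t)) (gradient (φ t) (x t)) (x t) (x (t + 1)) := by
    intro t ht
    by_cases hp : ∃ i, σ i = t
    · obtain ⟨i, rfl⟩ := hp
      simp only [φ, hσinj.extend_apply]
      exact ⟨(hfLip i).mono (hM ▸ le_max_left _ _), hfSC i, hstepP i⟩
    · simp only [φ, extend_apply' _ _ _ hp]
      exact ⟨hgLip.mono (hM ▸ le_max_right _ _), hgSC, hstepN t ht hp⟩
  have hregret := mirrorDescent_regret_le hQconv hdiff hconv hμ (fun t ht => (hobj t ht).1)
    (fun t ht => (hobj t ht).2.1) hx1 (fun t ht => (hobj t ht).2.2) hxsQ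
  have hsplit := sum_comp_add_mul_card_le_sum hσinj hσrange (A := fun t => φ t (x t) - φ t xs)
    (ε := ε) fun t ht hp => by
      have hgt := (hproductive t ht).not.2 hp
      simp only [φ, extend_apply' _ _ _ hp]
      linarith
  simp only [φ, hσinj.extend_apply, Nat.card_Icc, Fintype.card_fin] at hsplit
  have hH0 : (0 : ℝ) ≤ harmonic (T + TJ) := by rw [harmonic_eq_sum_Icc]; push_cast; positivity
  have hH := harmonic_le_one_add_log (T + TJ)
  have hhalf : M ^ 2 / (2 * μ) ≤ M ^ 2 / μ := by gcongr; linarith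
  rw [← sum_sub_distrib]
  push_cast at hsplit hH
  linarith [mul_le_mul hhalf hH hH0 (by positivity)]

/-- The key regret inequality for the switching Mirror Descent algorithm with
`η_t = 1/(μ·t)` and threshold `ε > 0`: if the run makes exactly `T` productive steps
(the `i`-th at step index `σ i`, using objective `f i`) and `T_J` non-productive steps,
then `Σ_i f_i(x_{t_i}) − Σ_i f_i(x*) ≤ (M²/μ)·(1 + ln(T + T_J)) − ε·T_J`. -/
theorem switching_mirror_descent_key_inequality
    {E : Type*} [NormedAddCommGroup E] [InnerProductSpace ℝ E] [FiniteDimensional ℝ E]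
    (Q : Set E) (hQne : Q.Nonempty) (hQclosed : IsClosed Q) (hQconv : Convex ℝ Q)
    (h : E → ℝ) (hdiff : Differentiable ℝ h) (hconv : ConvexOn ℝ Set.univ h)
    (T TJ : ℕ) (hT : 0 < T)
    (f : Fin T → E → ℝ) (g : E → ℝ)
    (hfdiff : ∀ i, Differentiable ℝ (f i)) (hgdiff : Differentiable ℝ g)
    (hfconv : ∀ i, ConvexOn ℝ Set.univ (f i)) (hgconv : ConvexOn ℝ Set.univ g)
    (Mf Mg μ : ℝ) (hμ : 0 < μ)
    (hfLip : ∀ i, RelLipschitz h Q Mf (f i)) (hgLip : RelLipschitz h Q Mg g)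
    (hfSC : ∀ i, RelStrongConvex h Q μ (f i)) (hgSC : RelStrongConvex h Q μ g)
    (M ε : ℝ) (hM : M = max Mf Mg) (hε : 0 < ε)
    -- the iterates and the run of the switching algorithm:
    (x : ℕ → E) (hx1 : x 1 ∈ Q)
    (σ : Fin T → ℕ) (hσmono : StrictMono σ)
    (hσrange : ∀ i, σ i ∈ Finset.Icc 1 (T + TJ))
    (hproductive : ∀ t ∈ Finset.Icc 1 (T + TJ), (g (x t) ≤ ε ↔ ∃ i, σ i = t))
    (hstepP : ∀ i : Fin T,
      MDStepV h Q (1 / (μ * σ i)) (gradient (f i) (x (σ i))) (x (σ i)) (x (σ i + 1)))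
    (hstepN : ∀ t ∈ Finset.Icc 1 (T + TJ), (¬ ∃ i, σ i = t) →
      MDStepV h Q (1 / (μ * t)) (gradient g (x t)) (x t) (x (t + 1)))
    -- the constrained minimizer x*:
    (xs : E) (hxsQ : xs ∈ Q) (hxsg : g xs ≤ 0)
    (hxsmin : ∀ y ∈ Q, g y ≤ 0 → ∑ i, f i xs ≤ ∑ i, f i y) :
    ∑ i, f i (x (σ i)) - ∑ i, f i xs ≤
      M ^ 2 / μ * (1 + Real.log (T + TJ)) - ε * TJ :=
  switching_mirror_descent_key_inequality_general Q hQconv h hdiff hconv T TJ f g Mf Mg μ hμ hfLip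
    hgLip hfSC hgSC M ε hM x hx1 σ hσmono hσrange hproductive hstepP hstepN xs hxsQ hxsg
end

section
/- Let E be a finite-dimensional real inner product space, h : E → ℝ a differentiable convex function with Bregman divergence V(y,x) = h(y) − h(x) − ⟨∇h(x), y − x⟩, and φ : E → ℝ a differentiable function. Fix x ∈ E, η > 0, M ≥ 0, and suppose ⟨∇φ(x), x − z⟩ ≤ M·√(2·V(z,x)) for all z ∈ E. If y ∈ E satisfies ∇h(y) = ∇h(x) − η·∇φ(x), then V(x, y) ≤ M²·η². -/
/-!
Adding the two Bregman divergences between `x` and `y` gives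
`V(x,y) + V(y,x) = ⟨∇h(x) − ∇h(y), x − y⟩ = η⟨∇φ(x), x − y⟩ ≤ η M t` with `t = √(2 V(y,x))`,
and `V(y,x) ≥ 0` by convexity of `h`. Hence `V(x,y) ≤ η M t − t²/2 ≤ (η M)²/2`.
-/

open scoped RealInnerProductSpace

theorem ConvexOn.add_fderiv_sub_le {E : Type*} [NormedAddCommGroup E] [NormedSpace ℝ E]
    {f : E → ℝ} {f' : E →L[ℝ] ℝ} {s : Set E} {a b : E} (hf : ConvexOn ℝ s f)
    (ha : a ∈ s) (hb : b ∈ s) (hf' : HasFDerivAt f f' a) :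
    f a + f' (b - a) ≤ f b := by
  -- restrict `f` to the line through `a` and `b`, where it is a convex function of one variable
  let ℓ : ℝ →ᵃ[ℝ] E := AffineMap.lineMap a b
  have hconv : ConvexOn ℝ (ℓ ⁻¹' s) (f ∘ ℓ) := hf.comp_affineMap ℓ
  have hderiv : HasDerivAt (f ∘ ℓ) (f' (b - a)) 0 := by
    have hf'ℓ : HasFDerivAt f f' (ℓ 0) := by simpa [ℓ] using hf'
    exact hf'ℓ.comp_hasDerivAt 0 AffineMap.hasDerivAt_lineMap
  have hslope := hconv.le_slope_of_hasDerivAt (by simpa [ℓ] using ha) (by simpa [ℓ] using hb)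
    one_pos hderiv
  simp only [slope_def_field, Function.comp_apply, ℓ, AffineMap.lineMap_apply_zero,
    AffineMap.lineMap_apply_one, sub_zero, div_one] at hslope
  linarith

section Bregman

variable {E : Type*} [NormedAddCommGroup E] [InnerProductSpace ℝ E] [CompleteSpace E]

theorem ConvexOn.add_inner_gradient_sub_le {f : E → ℝ} {s : Set E} {a b : E}
    (hf : ConvexOn ℝ s f) (ha : a ∈ s) (hb : b ∈ s) (hdiff : DifferentiableAt ℝ f a) :
    f a + ⟪gradient f a, b - a⟫ ≤ f b := by
  simpa [InnerProductSpace.toDual_apply_apply] using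
    hf.add_fderiv_sub_le ha hb (hasGradientAt_iff_hasFDerivAt.mp hdiff.hasGradientAt)

theorem breg_nonneg_s15 {h : E → ℝ} {s : Set E} {x y : E} (hconv : ConvexOn ℝ s h)
    (hx : x ∈ s) (hy : y ∈ s) (hdiff : DifferentiableAt ℝ h x) :
    0 ≤ breg h y x := by
  have := hconv.add_inner_gradient_sub_le hx hy hdiff
  rw [breg]
  linarith

theorem breg_add_breg (h : E → ℝ) (x y : E) :
    breg h x y + breg h y x = ⟪gradient h x - gradient h y, x - y⟫ := by
  simp only [breg, inner_sub_left, ← neg_sub x y, inner_neg_right]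
  ring

end Bregman

theorem bregman_mirror_step_bound_general
    {E : Type*} [NormedAddCommGroup E] [InnerProductSpace ℝ E] [FiniteDimensional ℝ E]
    (h : E → ℝ) (hdiff : Differentiable ℝ h) (hconv : ConvexOn ℝ Set.univ h)
    (φ : E → ℝ)
    (x : E) (η M : ℝ) (hη : 0 < η)
    (hLip : ∀ z : E, ⟪gradient φ x, x - z⟫ ≤ M * Real.sqrt (2 * breg h z x))
    (y : E) (hy : gradient h y = gradient h x - η • gradient φ x) :
    breg h x y ≤ M ^ 2 * η ^ 2 := by
  have hVyx : 0 ≤ breg h y x := breg_nonneg_s15 hconv trivial trivial (hdiff x)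
  have hsum : breg h x y + breg h y x = η * ⟪gradient φ x, x - y⟫ := by
    rw [breg_add_breg, hy, sub_sub_cancel, real_inner_smul_left]
  set t := Real.sqrt (2 * breg h y x)
  have ht : t ^ 2 = 2 * breg h y x := Real.sq_sqrt (by linarith)
  calc breg h x y = η * ⟪gradient φ x, x - y⟫ - t ^ 2 / 2 := by linarith
    _ ≤ η * (M * t) - t ^ 2 / 2 := by gcongr; exact hLip y
    _ ≤ (η * M) ^ 2 / 2 := by nlinarith [sq_nonneg (t - η * M)]
    _ ≤ M ^ 2 * η ^ 2 := by nlinarith [sq_nonneg (η * M)]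

/-- If `∇h(y) = ∇h(x) − η·∇φ(x)` and `φ` satisfies the `M`-relative Lipschitz
condition at `x`, i.e. `⟨∇φ(x), x − z⟩ ≤ M·√(2·V(z,x))` for all `z`, then
`V(x, y) ≤ M²·η²`. -/
theorem bregman_mirror_step_bound
    {E : Type*} [NormedAddCommGroup E] [InnerProductSpace ℝ E] [FiniteDimensional ℝ E]
    (h : E → ℝ) (hdiff : Differentiable ℝ h) (hconv : ConvexOn ℝ Set.univ h)
    (φ : E → ℝ) (hφdiff : Differentiable ℝ φ)
    (x : E) (η M : ℝ) (hη : 0 < η) (hM : 0 ≤ M)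
    (hLip : ∀ z : E, ⟪gradient φ x, x - z⟫ ≤ M * Real.sqrt (2 * breg h z x))
    (y : E) (hy : gradient h y = gradient h x - η • gradient φ x) :
    breg h x y ≤ M ^ 2 * η ^ 2 :=
  bregman_mirror_step_bound_general h hdiff hconv φ x η M hη hLip y hy
end
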